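/- arXiv:1112.6066 — 3 statements merged into one kernel-verified Lean document; each statement's English description precedes it below -/
import Mathlib

section
/- For γ, θ > 0 and any starting point x₀ > 0, the sequence defined by x_{n+1} = f(x_n) with f(x) = x/(1+θx) + 2γ converges to the fixed point g(γ,θ) = γ + √(γ² + 2γ/θ). -/
/-!
After one step the orbit stays in `[2γ, ∞)`, and there `f` is a contraction with constant
`(1 + 2γθ)⁻²`, because `f a - f b = (a - b) / ((1 + θa)(1 + θb))`. Since `gFix γ θ` is the
positive root of `θg² - 2γθg - 2γ = 0`, it is a fixed point of `f` lying in `[2γ, ∞)`, so the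
distance from the orbit to it decays geometrically.
-/

noncomputable def gFix (γ θ : ℝ) : ℝ := γ + Real.sqrt (γ ^ 2 + 2 * γ / θ)

open Filter Topology

theorem tendsto_of_abs_sub_succ_le {x : ℕ → ℝ} {g r : ℝ} (hr₀ : 0 ≤ r) (hr₁ : r < 1)
    (h : ∀ n, |x (n + 1) - g| ≤ r * |x n - g|) : Tendsto x atTop (𝓝 g) := by
  have hgeom : ∀ n, |x n - g| ≤ |x 0 - g| * r ^ n := by
    intro n
    induction n with
    | zero => simp
    | succ n ih =>
      calc |x (n + 1) - g| ≤ r * |x n - g| := h n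
        _ ≤ r * (|x 0 - g| * r ^ n) := mul_le_mul_of_nonneg_left ih hr₀
        _ = |x 0 - g| * r ^ (n + 1) := by ring
  rw [tendsto_iff_norm_sub_tendsto_zero]
  refine squeeze_zero_norm (fun n => by simpa using hgeom n) ?_
  simpa using (tendsto_pow_atTop_nhds_zero_of_lt_one hr₀ hr₁).const_mul |x 0 - g|

section StepMap

variable {θ c : ℝ}

/-- The map `f` of the recursion, with `c = 2γ`. -/
noncomputable def stepMap (θ c x : ℝ) : ℝ := x / (1 + θ * x) + c

theorem le_stepMap (hθ : 0 ≤ θ) {a : ℝ} (ha : 0 ≤ a) : c ≤ stepMap θ c a := by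
  unfold stepMap
  have : 0 ≤ a / (1 + θ * a) := by positivity
  linarith

theorem stepMap_sub_stepMap {a b : ℝ} (ha : 1 + θ * a ≠ 0) (hb : 1 + θ * b ≠ 0) :
    stepMap θ c a - stepMap θ c b = (a - b) / ((1 + θ * a) * (1 + θ * b)) := by
  rw [stepMap, stepMap, add_sub_add_right_eq_sub, div_sub_div _ _ ha hb]
  ring

theorem abs_stepMap_sub_stepMap_le (hθ : 0 ≤ θ) (hc : 0 ≤ c) {a b : ℝ} (ha : c ≤ a)
    (hb : c ≤ b) : |stepMap θ c a - stepMap θ c b| ≤ ((1 + θ * c) ^ 2)⁻¹ * |a - b| := by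
  have hca : 1 + θ * c ≤ 1 + θ * a := by gcongr
  have hcb : 1 + θ * c ≤ 1 + θ * b := by gcongr
  have hpos : 0 < 1 + θ * c := by positivity
  have hpa := hpos.trans_le hca
  have hpb := hpos.trans_le hcb
  rw [stepMap_sub_stepMap hpa.ne' hpb.ne', abs_div, abs_of_pos (mul_pos hpa hpb),
    div_eq_inv_mul, sq]
  gcongr

theorem stepMap_gFix {γ : ℝ} (hγ : 0 ≤ γ) (hθ : 0 < θ) :
    stepMap θ (2 * γ) (gFix γ θ) = gFix γ θ := by
  have hpos : 0 < 1 + θ * gFix γ θ := by unfold gFix; positivity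
  have hs : θ * Real.sqrt (γ ^ 2 + 2 * γ / θ) ^ 2 = θ * γ ^ 2 + 2 * γ := by
    rw [Real.sq_sqrt (by positivity)]
    field_simp
  unfold stepMap
  rw [div_add' _ _ _ hpos.ne', div_eq_iff hpos.ne']
  unfold gFix
  linear_combination -hs

theorem two_mul_le_gFix {γ : ℝ} (hγ : 0 ≤ γ) (hθ : 0 ≤ θ) : 2 * γ ≤ gFix γ θ := by
  have : γ ≤ Real.sqrt (γ ^ 2 + 2 * γ / θ) :=
    Real.le_sqrt_of_sq_le (le_add_of_nonneg_right (by positivity))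
  unfold gFix
  linarith

end StepMap

/-- For γ, θ > 0 and any x₀ > 0, the orbit x_{n+1} = f(x_n) with
f(x) = x/(1+θx) + 2γ converges to the fixed point g(γ,θ). -/
theorem stmt_3 (γ θ : ℝ) (hγ : 0 < γ) (hθ : 0 < θ) (x : ℕ → ℝ) (hx0 : 0 < x 0)
    (hrec : ∀ n, x (n + 1) = x n / (1 + θ * x n) + 2 * γ) :
    Filter.Tendsto x Filter.atTop (nhds (gFix γ θ)) := by
  have hstep : ∀ n, x (n + 1) = stepMap θ (2 * γ) (x n) := hrec
  have hinv : ∀ n, 2 * γ ≤ x (n + 1) := by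
    intro n
    induction n with
    | zero => exact hstep 0 ▸ le_stepMap hθ.le hx0.le
    | succ n ih => exact hstep (n + 1) ▸ le_stepMap hθ.le (by linarith)
  have hr₁ : ((1 + θ * (2 * γ)) ^ 2)⁻¹ < 1 :=
    inv_lt_one_of_one_lt₀ (one_lt_pow₀ (by nlinarith) two_ne_zero)
  refine (tendsto_add_atTop_iff_nat 1).mp (tendsto_of_abs_sub_succ_le (by positivity) hr₁ ?_)
  intro n
  conv_lhs => rw [hstep (n + 1), ← stepMap_gFix hγ.le hθ]
  exact abs_stepMap_sub_stepMap_le hθ.le (by positivity) (hinv n)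
    (two_mul_le_gFix hγ.le hθ.le)
end

section
/- Let 0 < γ_min ≤ γ_max and 0 < θ_min ≤ θ_max, and write g_min = g(γ_min, θ_max), g_max = g(γ_max, θ_min) where g(γ,θ) = γ + √(γ² + 2γ/θ). If a sequence (x_j) of positive reals satisfies x_{j+1} = x_j/(1+θ_j x_j) + 2γ_j for some sequences γ_j ∈ [γ_min, γ_max] and θ_j ∈ [θ_min, θ_max], and x_N ∈ [g_min, g_max] for some N, then x_j ∈ [g_min, g_max] for all j ≥ N. -/
noncomputable def gStep (θ γ x : ℝ) : ℝ := x / (1 + θ * x) + 2 * γ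

theorem gFix_nonneg {γ θ : ℝ} (hγ : 0 ≤ γ) : 0 ≤ gFix γ θ :=
  add_nonneg hγ (Real.sqrt_nonneg _)

theorem gStep_gFix {γ θ : ℝ} (hγ : 0 ≤ γ) (hθ : 0 < θ) : gStep θ γ (gFix γ θ) = gFix γ θ := by
  have hsq : Real.sqrt (γ ^ 2 + 2 * γ / θ) ^ 2 = γ ^ 2 + 2 * γ / θ :=
    Real.sq_sqrt (by positivity)
  have hquad : θ * (gFix γ θ ^ 2 - 2 * γ * gFix γ θ) = 2 * γ := by
    have : gFix γ θ ^ 2 - 2 * γ * gFix γ θ = 2 * γ / θ := by unfold gFix; linear_combination hsq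
    rw [this, mul_div_cancel₀ _ hθ.ne']
  have hden : 0 < 1 + θ * gFix γ θ := by have := gFix_nonneg (θ := θ) hγ; positivity
  unfold gStep
  rw [div_add' _ _ _ hden.ne', div_eq_iff hden.ne']
  linear_combination -hquad

theorem gStep_le_gStep {θ θ' γ γ' x x' : ℝ} (hθ' : 0 ≤ θ') (hθθ' : θ' ≤ θ) (hγγ' : γ ≤ γ')
    (hx : 0 ≤ x) (hxx' : x ≤ x') : gStep θ γ x ≤ gStep θ' γ' x' := by
  have hx' : 0 ≤ x' := hx.trans hxx'
  have hfrac : x / (1 + θ * x) ≤ x' / (1 + θ' * x') := by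
    rw [div_le_div_iff₀ (by nlinarith) (by positivity)]
    nlinarith [mul_nonneg (mul_nonneg hx hx') (sub_nonneg.mpr hθθ')]
  unfold gStep
  linarith

/-- The interval [g(γ_min, θ_max), g(γ_max, θ_min)] is forward
invariant for the non-autonomous recursion x_{j+1} = x_j/(1+θ_j x_j) + 2γ_j with
γ_j ∈ [γ_min, γ_max], θ_j ∈ [θ_min, θ_max]. -/
theorem stmt_4 (γmin γmax θmin θmax : ℝ)
    (hγ : 0 < γmin) (hγ' : γmin ≤ γmax) (hθ : 0 < θmin) (hθ' : θmin ≤ θmax)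
    (γs θs x : ℕ → ℝ)
    (hγs : ∀ j, γs j ∈ Set.Icc γmin γmax) (hθs : ∀ j, θs j ∈ Set.Icc θmin θmax)
    (hpos : ∀ j, 0 < x j)
    (hrec : ∀ j, x (j + 1) = x j / (1 + θs j * x j) + 2 * γs j)
    (N : ℕ) (hN : x N ∈ Set.Icc (gFix γmin θmax) (gFix γmax θmin)) :
    ∀ j, N ≤ j → x j ∈ Set.Icc (gFix γmin θmax) (gFix γmax θmin) := by
  have hγmax : 0 ≤ γmax := hγ.le.trans hγ'
  have hθmax : 0 < θmax := hθ.trans_le hθ'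
  intro j hj
  induction j, hj using Nat.le_induction with
  | base => exact hN
  | succ j _ ih =>
    obtain ⟨hγlo, hγhi⟩ := hγs j
    obtain ⟨hθlo, hθhi⟩ := hθs j
    rw [show x (j + 1) = gStep (θs j) (γs j) (x j) from hrec j]
    constructor
    · calc gFix γmin θmax = gStep θmax γmin (gFix γmin θmax) := (gStep_gFix hγ.le hθmax).symm
        _ ≤ gStep (θs j) (γs j) (x j) :=
          gStep_le_gStep (hθ.le.trans hθlo) hθhi hγlo (gFix_nonneg hγ.le) ih.1
    · calc gStep (θs j) (γs j) (x j) ≤ gStep θmin γmax (gFix γmax θmin) :=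
          gStep_le_gStep hθ.le hθlo hγhi (hpos j).le ih.2
        _ = gFix γmax θmin := gStep_gFix hγmax hθ
end

section
/- Let X be a metric space and Υ : X → Σ⁺ a bijection onto its image such that Υ is Lipschitz into (Υ(X), d_λ) and Υ⁻¹ is Lipschitz from (Υ(X), d_μ) onto X, where Υ(X) contains a cylinder [α]_N of Σ⁺. Then −ln(u−1)/ln λ ≤ dim_H X ≤ −ln(u−1)/ln μ. -/
/-
Encode a point `σ` of the shift on `b + 1` symbols by its first symbol and its transition digits:
`σ (k + 1)` is one of the `b` symbols different from `σ k`, i.e. a digit in `Fin b`.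
Upper bound: the fibres of "first `n + 1` symbols" form `(b + 1) b ^ n` sets of `d_μ`-diameter
`μ ^ (n + 1)`, hence of diameter `≤ L' μ ^ (n + 1)` in `X`; the Hausdorff `d`-sums of these
covers go to zero as soon as `b μ ^ d < 1`.
Lower bound: reading the transition digits after position `N` as a base-`b` expansion gives a map
onto `[0, 1]` from the cylinder, which is Hölder of exponent `-log b / log λ` for `d_λ`, hence
on `X`, and a Hölder map of exponent `r` onto a set of dimension one forces dimension `≥ r`.
-/

open Classical MeasureTheory

/-- One-sided shift space on `u` symbols with no consecutive repetitions. -/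
def OneSidedShift (u : ℕ) := {α : ℕ → Fin u // ∀ i, α i ≠ α (i + 1)}

/-- Length of the longest common initial block of two sequences. -/
noncomputable def initBlock {u : ℕ} (α β : OneSidedShift u) : ℕ :=
  sSup {n : ℕ | ∀ i < n, α.1 i = β.1 i}

/-- The metric d_θ on the one-sided shift space. -/
noncomputable def dTheta {u : ℕ} (θ : ℝ) (α β : OneSidedShift u) : ℝ :=
  if α = β then 0 else θ ^ initBlock α β

/-- The cylinder [α]_N : sequences agreeing with α in the first N coordinates. -/
def cylinder {u : ℕ} (α : OneSidedShift u) (N : ℕ) : Set (OneSidedShift u) :=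
  {β | ∀ i < N, β.1 i = α.1 i}

lemma pow_rpow_neg_log_div_log {θ x : ℝ} (hθ : 0 < θ) (hθ1 : θ ≠ 1) (hx : 0 < x)
    (m : ℕ) : (θ ^ m) ^ (-Real.log x / Real.log θ) = (x ^ m)⁻¹ := by
  have hlog : Real.log θ ≠ 0 := Real.log_ne_zero_of_pos_of_ne_one hθ hθ1
  rw [Real.rpow_def_of_pos (by positivity), ← Real.exp_log (inv_pos.2 (pow_pos hx m)),
    Real.log_inv, Real.log_pow, Real.log_pow]
  congr 1
  field_simp

open Set in
theorem ofReal_le_dimH_univ_of_dist_le {X : Type*} [MetricSpace X] {f : X → ℝ} {C r : ℝ}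
    (hC : 0 ≤ C) (hr : 0 < r) (hf : ∀ x y, dist (f x) (f y) ≤ C * dist x y ^ r)
    (hrange : (interior (range f)).Nonempty) :
    ENNReal.ofReal r ≤ dimH (univ : Set X) := by
  have hholder : HolderWith C.toNNReal r.toNNReal f := fun x y => by
    rw [edist_dist, edist_dist, Real.coe_toNNReal _ hr.le,
      ENNReal.ofReal_rpow_of_nonneg dist_nonneg hr.le]
    exact (ENNReal.ofReal_le_ofReal (hf x y)).trans_eq (ENNReal.ofReal_mul hC)
  have himage := hholder.dimH_image_le (Real.toNNReal_pos.2 hr) univ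
  rw [image_univ, Real.dimH_of_nonempty_interior hrange, Module.finrank_self, Nat.cast_one,
    ENNReal.le_div_iff_mul_le (by simp [hr]) (by simp), one_mul] at himage
  exact himage

open Set in
theorem dimH_univ_le_of_coding {X : Type*} [MetricSpace X] {ι : ℕ → Type*}
    [∀ n, Fintype (ι n)] (code : ∀ n, X → ι n) {C K c θ : ℝ} (hK : 0 < K) (hc : 0 ≤ c)
    (hθ0 : 0 < θ) (hθ1 : θ < 1) (hcard : ∀ n, (Fintype.card (ι n) : ℝ) ≤ C * K ^ n)
    (hdist : ∀ n x y, code n x = code n y → dist x y ≤ c * θ ^ n) :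
    dimH (univ : Set X) ≤ ENNReal.ofReal (-Real.log K / Real.log θ) := by
  borelize X
  have hlogθ : Real.log θ < 0 := Real.log_neg hθ0 hθ1
  refine dimH_le fun d hd => ?_
  by_contra! hlt
  rw [← ENNReal.ofReal_coe_nnreal, ENNReal.ofReal_lt_ofReal_iff'] at hlt
  obtain ⟨hs0, hd0⟩ := hlt
  set q := K * θ ^ (d : ℝ) with hq_def
  -- `q < 1` is exactly `d > -log K / log θ`, and `K ^ n` cells of size `θ ^ n` give `q ^ n`.
  have hq : q < 1 := by
    have : Real.log K + Real.log θ * d < 0 := by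
      rw [div_lt_iff_of_neg hlogθ] at hs0
      linarith
    calc q = Real.exp (Real.log K + Real.log θ * d) := by
          rw [Real.exp_add, Real.exp_log hK, ← Real.rpow_def_of_pos hθ0]
      _ < 1 := Real.exp_lt_one_iff.2 this
  have hdiam : ∀ n i, Metric.ediam (code n ⁻¹' {i}) ≤ ENNReal.ofReal (c * θ ^ n) :=
    fun n i => Metric.ediam_le fun x hx y hy => by
      rw [edist_dist]
      exact ENNReal.ofReal_le_ofReal (hdist n x y (hx.trans hy.symm))
  have hsum : ∀ n, ∑ i, Metric.ediam (code n ⁻¹' {i}) ^ (d : ℝ) ≤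
      ENNReal.ofReal (C * c ^ (d : ℝ) * q ^ n) := fun n =>
    calc ∑ i, Metric.ediam (code n ⁻¹' {i}) ^ (d : ℝ)
        ≤ ∑ _i : ι n, ENNReal.ofReal (c * θ ^ n) ^ (d : ℝ) :=
          Finset.sum_le_sum fun i _ => ENNReal.rpow_le_rpow (hdiam n i) hd0.le
      _ = ENNReal.ofReal (Fintype.card (ι n) * (c * θ ^ n) ^ (d : ℝ)) := by
          rw [Finset.sum_const, nsmul_eq_mul, ENNReal.ofReal_rpow_of_nonneg (by positivity) hd0.le,
            ENNReal.ofReal_mul (by positivity), ENNReal.ofReal_natCast, Finset.card_univ]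
      _ ≤ ENNReal.ofReal (C * K ^ n * (c * θ ^ n) ^ (d : ℝ)) :=
          ENNReal.ofReal_le_ofReal (mul_le_mul_of_nonneg_right (hcard n) (by positivity))
      _ = ENNReal.ofReal (C * c ^ (d : ℝ) * q ^ n) := by
          rw [Real.mul_rpow hc (by positivity), ← Real.rpow_pow_comm hθ0.le, hq_def, mul_pow]
          congr 1
          ring
  have hlim : Filter.Tendsto (fun n => ENNReal.ofReal (C * c ^ (d : ℝ) * q ^ n))
      Filter.atTop (nhds 0) := by
    simpa using ENNReal.tendsto_ofReal
      ((tendsto_pow_atTop_nhds_zero_of_lt_one (by positivity) hq).const_mul (C * c ^ (d : ℝ)))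
  have hdiam_lim : Filter.Tendsto (fun n => ENNReal.ofReal (c * θ ^ n)) Filter.atTop (nhds 0) := by
    simpa using ENNReal.tendsto_ofReal
      ((tendsto_pow_atTop_nhds_zero_of_lt_one hθ0.le hθ1).const_mul c)
  have hzero : μH[d] (univ : Set X) ≤ 0 :=
    (Measure.hausdorffMeasure_le_liminf_sum _ univ _ hdiam_lim (fun n i => code n ⁻¹' {i})
      (.of_forall (hdiam ·)) (.of_forall fun n x _ => mem_iUnion.2 ⟨code n x, rfl⟩)).trans
      ((Filter.liminf_le_liminf (.of_forall hsum)).trans_eq hlim.liminf_eq)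
  simp [le_zero_iff.1 hzero] at hd

namespace OneSidedShift

section Metric

variable {u : ℕ} {σ τ : OneSidedShift u}

lemma bddAbove_agree (h : σ ≠ τ) : BddAbove {n : ℕ | ∀ i < n, σ.1 i = τ.1 i} := by
  obtain ⟨j, hj⟩ : ∃ j, σ.1 j ≠ τ.1 j := by
    by_contra! hall
    exact h (Subtype.ext (funext hall))
  exact ⟨j, fun n hn => not_lt.1 fun hjn => hj (hn j hjn)⟩

lemma le_initBlock (h : σ ≠ τ) {n : ℕ} (hn : ∀ i < n, σ.1 i = τ.1 i) :
    n ≤ initBlock σ τ :=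
  le_csSup (bddAbove_agree h) hn

lemma eq_of_lt_initBlock (h : σ ≠ τ) : ∀ i < initBlock σ τ, σ.1 i = τ.1 i :=
  Nat.sSup_mem ⟨0, by simp⟩ (bddAbove_agree h)

lemma dTheta_nonneg {θ : ℝ} (hθ : 0 ≤ θ) : 0 ≤ dTheta θ σ τ := by
  unfold dTheta
  split_ifs <;> positivity

lemma dTheta_le_pow_of_agree {θ : ℝ} (hθ0 : 0 ≤ θ) (hθ1 : θ ≤ 1) {n : ℕ}
    (hn : ∀ i < n, σ.1 i = τ.1 i) : dTheta θ σ τ ≤ θ ^ n := by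
  unfold dTheta
  split_ifs with h
  · positivity
  · exact pow_le_pow_of_le_one hθ0 hθ1 (le_initBlock h hn)

end Metric

variable {b : ℕ}

def transitionDigit (σ : OneSidedShift (b + 1)) (k : ℕ) : Fin b :=
  (finSuccAboveEquiv (σ.1 k)).symm ⟨σ.1 (k + 1), (σ.2 k).symm⟩

lemma succAbove_transitionDigit (σ : OneSidedShift (b + 1)) (k : ℕ) :
    (σ.1 k).succAbove (σ.transitionDigit k) = σ.1 (k + 1) :=
  congrArg Subtype.val ((finSuccAboveEquiv (σ.1 k)).apply_symm_apply _)

lemma transitionDigit_eq_iff {σ : OneSidedShift (b + 1)} {k : ℕ} {j : Fin b} :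
    σ.transitionDigit k = j ↔ (σ.1 k).succAbove j = σ.1 (k + 1) := by
  rw [← succAbove_transitionDigit, Fin.succAbove_right_inj, eq_comm]

lemma transitionDigit_congr {σ τ : OneSidedShift (b + 1)} {k : ℕ} (h₀ : σ.1 k = τ.1 k)
    (h₁ : σ.1 (k + 1) = τ.1 (k + 1)) : σ.transitionDigit k = τ.transitionDigit k := by
  rw [transitionDigit_eq_iff, h₀, h₁, succAbove_transitionDigit]

lemma eq_of_transitionDigit_eq {σ τ : OneSidedShift (b + 1)} {n : ℕ} (h₀ : σ.1 0 = τ.1 0)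
    (h : ∀ k < n, σ.transitionDigit k = τ.transitionDigit k) : ∀ i ≤ n, σ.1 i = τ.1 i
  | 0, _ => h₀
  | k + 1, hk => by
    rw [← succAbove_transitionDigit, ← succAbove_transitionDigit, h k (by omega),
      eq_of_transitionDigit_eq h₀ h k (by omega)]

def pathOfDigits (p : Fin (b + 1)) (d : ℕ → Fin b) : ℕ → Fin (b + 1)
  | 0 => p
  | k + 1 => (pathOfDigits p d k).succAbove (d k)

def ofTransitionDigits (p : Fin (b + 1)) (d : ℕ → Fin b) : OneSidedShift (b + 1) :=
  ⟨pathOfDigits p d, fun k => ((pathOfDigits p d k).succAbove_ne (d k)).symm⟩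

lemma transitionDigit_ofTransitionDigits (p : Fin (b + 1)) (d : ℕ → Fin b) (k : ℕ) :
    (ofTransitionDigits p d).transitionDigit k = d k :=
  transitionDigit_eq_iff.2 rfl

def shiftedDigits (N : ℕ) (σ : OneSidedShift (b + 1)) (k : ℕ) : Fin b :=
  σ.transitionDigit (N + k)

lemma exists_mem_cylinder_shiftedDigits_eq (α : OneSidedShift (b + 1)) (N : ℕ)
    (d : ℕ → Fin b) : ∃ σ ∈ cylinder α N, shiftedDigits N σ = d := by
  set e : ℕ → Fin b := fun k => if k < N then α.transitionDigit k else d (k - N)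
  refine ⟨ofTransitionDigits (α.1 0) e, fun i hi => ?_, funext fun k => ?_⟩
  · refine eq_of_transitionDigit_eq (σ := ofTransitionDigits _ e) (τ := α) rfl
      (fun k hk => ?_) i hi.le
    simp [transitionDigit_ofTransitionDigits, e, hk]
  · simp [shiftedDigits, transitionDigit_ofTransitionDigits, e]

lemma Icc_subset_ofDigits_shiftedDigits_image_cylinder (hb : 1 < b)
    (α : OneSidedShift (b + 1)) (N : ℕ) :
    Set.Icc 0 1 ⊆ (fun σ => Real.ofDigits (shiftedDigits N σ)) '' cylinder α N := by
  intro t ht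
  obtain ⟨d, -, rfl⟩ := Real.ofDigits_SurjOn hb ht
  obtain ⟨σ, hσ, rfl⟩ := exists_mem_cylinder_shiftedDigits_eq α N d
  exact ⟨σ, hσ, rfl⟩

/-- Agreement on the first `m` symbols forces agreement of the first `m - N - 1` shifted digits. -/
lemma abs_ofDigits_shiftedDigits_sub_le {θ : ℝ} (hθ0 : 0 < θ) (hθ1 : θ < 1) (hb : 0 < b)
    (N : ℕ) (σ τ : OneSidedShift (b + 1)) :
    |Real.ofDigits (shiftedDigits N σ) - Real.ofDigits (shiftedDigits N τ)| ≤
      (b : ℝ) ^ (N + 1) * dTheta θ σ τ ^ (-Real.log b / Real.log θ) := by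
  by_cases hστ : σ = τ
  · subst hστ
    simp only [sub_self, abs_zero]
    exact mul_nonneg (by positivity) (Real.rpow_nonneg (dTheta_nonneg hθ0.le) _)
  set m := initBlock σ τ
  have hagree : ∀ k < m - (N + 1), shiftedDigits N σ k = shiftedDigits N τ k := fun k hk =>
    transitionDigit_congr (eq_of_lt_initBlock hστ _ (by omega))
      (eq_of_lt_initBlock hστ _ (by omega))
  have hb1 : (1 : ℝ) ≤ b := by exact_mod_cast hb
  calc _ ≤ ((b : ℝ) ^ (m - (N + 1)))⁻¹ := Real.abs_ofDigits_sub_ofDigits_le hagree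
    _ ≤ (b : ℝ) ^ (N + 1) * ((b : ℝ) ^ m)⁻¹ := by
      rw [← div_eq_mul_inv, le_div_iff₀ (by positivity), ← div_eq_inv_mul,
        div_le_iff₀ (by positivity), ← pow_add]
      exact pow_le_pow_right₀ hb1 (by omega)
    _ = (b : ℝ) ^ (N + 1) * dTheta θ σ τ ^ (-Real.log b / Real.log θ) := by
      rw [dTheta, if_neg hστ, pow_rpow_neg_log_div_log hθ0 hθ1.ne (by positivity)]

def prefixCode (n : ℕ) (σ : OneSidedShift (b + 1)) : Fin (b + 1) × (Fin n → Fin b) :=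
  (σ.1 0, fun k => σ.transitionDigit k)

lemma dTheta_le_of_prefixCode_eq {θ : ℝ} (hθ0 : 0 ≤ θ) (hθ1 : θ ≤ 1) {n : ℕ}
    {σ τ : OneSidedShift (b + 1)} (h : prefixCode n σ = prefixCode n τ) :
    dTheta θ σ τ ≤ θ ^ (n + 1) := by
  simp only [prefixCode, Prod.mk.injEq, funext_iff] at h
  refine dTheta_le_pow_of_agree hθ0 hθ1 fun i hi =>
    eq_of_transitionDigit_eq h.1 (fun k hk => h.2 ⟨k, hk⟩) i (by omega)

end OneSidedShift

open OneSidedShift in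
theorem stmt_12_general {X : Type*} [MetricSpace X] (u : ℕ) (hu : 3 ≤ u)
    (lam mu : ℝ) (hlam : lam ∈ Set.Ioo (0 : ℝ) 1) (hmu : mu ∈ Set.Ioo (0 : ℝ) 1)
    (Υ : X → OneSidedShift u)
    (L L' : ℝ) (hL : 0 < L) (hL' : 0 < L')
    (hLip : ∀ x y : X, dTheta lam (Υ x) (Υ y) ≤ L * dist x y)
    (hLip' : ∀ x y : X, dist x y ≤ L' * dTheta mu (Υ x) (Υ y))
    (α : OneSidedShift u) (N : ℕ) (hcyl : cylinder α N ⊆ Set.range Υ) :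
    ENNReal.ofReal (-Real.log ((u : ℝ) - 1) / Real.log lam) ≤
        dimH (Set.univ : Set X) ∧
      dimH (Set.univ : Set X) ≤
        ENNReal.ofReal (-Real.log ((u : ℝ) - 1) / Real.log mu) := by
  obtain ⟨b, rfl⟩ : ∃ b, u = b + 1 := ⟨u - 1, by omega⟩
  have hb : 1 < b := by omega
  have hb0 : (0 : ℝ) < b := by exact_mod_cast (by omega : 0 < b)
  rw [Nat.cast_succ, add_sub_cancel_right]
  set r := -Real.log b / Real.log lam
  have hr : 0 < r := div_pos_of_neg_of_neg (neg_neg_of_pos (Real.log_pos (by exact_mod_cast hb)))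
    (Real.log_neg hlam.1 hlam.2)
  constructor
  · refine ofReal_le_dimH_univ_of_dist_le (f := fun x => Real.ofDigits (shiftedDigits N (Υ x)))
      (C := b ^ (N + 1) * L ^ r) (by positivity) hr (fun x y => ?_) ?_
    · calc _ ≤ (b : ℝ) ^ (N + 1) * dTheta lam (Υ x) (Υ y) ^ r :=
            abs_ofDigits_shiftedDigits_sub_le hlam.1 hlam.2 (by omega) N _ _
        _ ≤ (b : ℝ) ^ (N + 1) * (L * dist x y) ^ r := by
            gcongr
            exacts [dTheta_nonneg hlam.1.le, hLip x y]
        _ = _ := by rw [Real.mul_rpow hL.le dist_nonneg, mul_assoc]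
    · have hIcc := (Icc_subset_ofDigits_shiftedDigits_image_cylinder hb α N).trans
        ((Set.image_mono hcyl).trans_eq (Set.range_comp _ Υ).symm)
      exact ((interior_Icc (a := (0 : ℝ)) (b := 1)).symm ▸ Set.nonempty_Ioo.2 zero_lt_one).mono
        (interior_mono hIcc)
  · exact dimH_univ_le_of_coding (fun n x => prefixCode n (Υ x)) (C := b + 1) (K := b)
      (c := L' * mu) hb0 (mul_pos hL' hmu.1).le hmu.1 hmu.2
      (fun n => by simp [Fintype.card_prod])
      fun n x y hxy => (hLip' x y).trans <| by
        rw [mul_assoc, ← pow_succ']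
        exact mul_le_mul_of_nonneg_left (dTheta_le_of_prefixCode_eq hmu.1.le hmu.2.le hxy) hL'.le

/-- if Υ : X → Σ⁺ is injective, Lipschitz into (Υ(X), d_λ), with
Lipschitz inverse from (Υ(X), d_μ), and Υ(X) contains a cylinder, then
−ln(u−1)/ln λ ≤ dim_H X ≤ −ln(u−1)/ln μ. -/
theorem stmt_12 {X : Type*} [MetricSpace X] (u : ℕ) (hu : 3 ≤ u)
    (lam mu : ℝ) (hlam : lam ∈ Set.Ioo (0 : ℝ) 1) (hmu : mu ∈ Set.Ioo (0 : ℝ) 1)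
    (Υ : X → OneSidedShift u) (hinj : Function.Injective Υ)
    (L L' : ℝ) (hL : 0 < L) (hL' : 0 < L')
    (hLip : ∀ x y : X, dTheta lam (Υ x) (Υ y) ≤ L * dist x y)
    (hLip' : ∀ x y : X, dist x y ≤ L' * dTheta mu (Υ x) (Υ y))
    (α : OneSidedShift u) (N : ℕ) (hcyl : cylinder α N ⊆ Set.range Υ) :
    ENNReal.ofReal (-Real.log ((u : ℝ) - 1) / Real.log lam) ≤
        dimH (Set.univ : Set X) ∧
      dimH (Set.univ : Set X) ≤
        ENNReal.ofReal (-Real.log ((u : ℝ) - 1) / Real.log mu) :=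
  stmt_12_general u hu lam mu hlam hmu Υ L L' hL hL' hLip hLip' α N hcyl
end
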